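/- arXiv:1805.00469 — 3 statements merged into one kernel-verified Lean document; each statement's English description precedes it below -/
import Mathlib

section
/- The functor T sending a set X to the set of lists over X preserves pullbacks: given a pullback square of sets, applying the list functor componentwise (mapping lists) yields a pullback square. -/
/-- A commuting square of sets `p₁, p₂, f, g` is a pullback square if it satisfies
the universal property of pullbacks in `Set`. -/
def IsPbSq {P X Y Z : Type} (p₁ : P → X) (p₂ : P → Y) (f : X → Z) (g : Y → Z) : Prop :=
  (∀ a, f (p₁ a) = g (p₂ a)) ∧
  ∀ (Q : Type) (q₁ : Q → X) (q₂ : Q → Y), (∀ u, f (q₁ u) = g (q₂ u)) →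
    ∃! h : Q → P, p₁ ∘ h = q₁ ∧ p₂ ∘ h = q₂

/-!
In `Set` the universal property may be tested on the one-point set alone: a commuting square
is a pullback iff every pair `(x, y)` with `f x = g y` has exactly one preimage in `P`.
For lists, `map f l₁ = map g l₂` says that `l₁` and `l₂` are related entrywise by
`f x = g y`, so a list in `P` over `(l₁, l₂)` is obtained, uniquely, by lifting entry by entry.
-/

theorem isPbSq_iff {P X Y Z : Type} {p₁ : P → X} {p₂ : P → Y} {f : X → Z} {g : Y → Z} :
    IsPbSq p₁ p₂ f g ↔ (∀ a, f (p₁ a) = g (p₂ a)) ∧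
      ∀ x y, f x = g y → ∃! a, p₁ a = x ∧ p₂ a = y := by
  refine and_congr_right fun _ => ⟨fun univ x y hxy => ?_, fun lift Q q₁ q₂ hq => ?_⟩
  · obtain ⟨k, ⟨hk₁, hk₂⟩, hk⟩ := univ PUnit (fun _ => x) (fun _ => y) (fun _ => hxy)
    refine ⟨k (), ⟨congrFun hk₁ (), congrFun hk₂ ()⟩, fun a ⟨ha₁, ha₂⟩ => ?_⟩
    exact congrFun (hk (fun _ => a) ⟨funext fun _ => ha₁, funext fun _ => ha₂⟩) ()
  · choose k hk using fun u => (lift _ _ (hq u)).exists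
    refine ⟨k, ⟨funext fun u => (hk u).1, funext fun u => (hk u).2⟩, fun k' ⟨h₁, h₂⟩ => ?_⟩
    exact funext fun u => (lift _ _ (hq u)).unique ⟨congrFun h₁ u, congrFun h₂ u⟩ (hk u)

theorem List.Forall₂.existsUnique_map {P X Y : Type} {p₁ : P → X} {p₂ : P → Y}
    {R : X → Y → Prop} (lift : ∀ x y, R x y → ∃! a, p₁ a = x ∧ p₂ a = y)
    {l₁ : List X} {l₂ : List Y} (h : Forall₂ R l₁ l₂) :
    ∃! l : List P, l.map p₁ = l₁ ∧ l.map p₂ = l₂ := by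
  induction h with
  | nil => exact ⟨[], ⟨rfl, rfl⟩, fun l hl => List.map_eq_nil_iff.mp hl.1⟩
  | cons hxy _ ih =>
    obtain ⟨a, ⟨ha₁, ha₂⟩, ha⟩ := lift _ _ hxy
    obtain ⟨l, ⟨hl₁, hl₂⟩, hl⟩ := ih
    refine ⟨a :: l, ⟨by simp [ha₁, hl₁], by simp [ha₂, hl₂]⟩, ?_⟩
    rintro (_ | ⟨a', l'⟩) ⟨h₁, h₂⟩
    · simp at h₁
    · simp only [List.map_cons, List.cons.injEq] at h₁ h₂
      rw [ha a' ⟨h₁.1, h₂.1⟩, hl l' ⟨h₁.2, h₂.2⟩]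

theorem List.forall₂_of_map_eq_map {X Y Z : Type} {f : X → Z} {g : Y → Z}
    {l₁ : List X} {l₂ : List Y} (h : l₁.map f = l₂.map g) :
    Forall₂ (fun x y => f x = g y) l₁ l₂ := by
  have : Forall₂ (· = ·) (l₁.map f) (l₂.map g) := by rw [forall₂_eq_eq_eq]; exact h
  simpa only [forall₂_map_left_iff, forall₂_map_right_iff] using this

/-- The list functor `T(X) = List X`, `T(f) = List.map f`, preserves pullbacks. -/
theorem list_functor_preserves_pullbacks {P X Y Z : Type}
    (p₁ : P → X) (p₂ : P → Y) (f : X → Z) (g : Y → Z)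
    (h : IsPbSq p₁ p₂ f g) :
    IsPbSq (List.map p₁) (List.map p₂) (List.map f) (List.map g) := by
  obtain ⟨comm, lift⟩ := isPbSq_iff.mp h
  refine isPbSq_iff.mpr ⟨fun l => ?_, fun l₁ l₂ e => ?_⟩
  · simp only [List.map_map]
    exact List.map_congr_left fun a _ => comm a
  · exact (List.forall₂_of_map_eq_map e).existsUnique_map lift
end

section
/- Every naturality square of the multiplication μ of the list monad is a pullback: for any function f : X → Y, the square with top μ_X : List(List X) → List X, bottom μ_Y, left List(List f), right List f, is a pullback of sets. -/
theorem isPbSq_of_existsUnique {P X Y Z : Type} {p₁ : P → X} {p₂ : P → Y} {f : X → Z}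
    {g : Y → Z} (hcomm : ∀ a, f (p₁ a) = g (p₂ a))
    (hlift : ∀ x y, f x = g y → ∃! a, p₁ a = x ∧ p₂ a = y) : IsPbSq p₁ p₂ f g := by
  refine ⟨hcomm, fun Q q₁ q₂ hq => ?_⟩
  choose h hh huniq using fun u => hlift (q₁ u) (q₂ u) (hq u)
  refine ⟨h, ⟨funext fun u => (hh u).1, funext fun u => (hh u).2⟩, ?_⟩
  rintro h' ⟨h₁, h₂⟩
  exact funext fun u => huniq u (h' u) ⟨congrFun h₁ u, congrFun h₂ u⟩

namespace List

variable {α β : Type*}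

theorem splitLengths_map_length_flatten (L : List (List α)) :
    (L.map length).splitLengths L.flatten = L := by
  induction L with
  | nil => rfl
  | cons l L ih => simp [ih]

theorem map_splitLengths (f : α → β) (sz : List ℕ) (l : List α) :
    (sz.splitLengths l).map (map f) = sz.splitLengths (l.map f) := by
  induction sz generalizing l with
  | nil => rfl
  | cons n sz ih => simp [ih, map_take, map_drop]

theorem existsUnique_flatten_eq_and_map_map_eq {f : α → β} {l : List α}
    {L : List (List β)} (h : l.map f = L.flatten) :
    ∃! M : List (List α), M.flatten = l ∧ M.map (map f) = L := by
  have hlen : l.length = (L.map length).sum := by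
    rw [← length_flatten, ← h, length_map]
  refine ⟨(L.map length).splitLengths l, ⟨flatten_splitLengths _ _ hlen.le, ?_⟩, ?_⟩
  · rw [map_splitLengths, h, splitLengths_map_length_flatten]
  · rintro M ⟨rfl, rfl⟩
    simp only [map_map, Function.comp_def, length_map, splitLengths_map_length_flatten]

end List

/-- Every naturality square of the multiplication `μ` (flattening/join) of the list monad
is a pullback: for `f : X → Y`, the square with top `μ_X : List (List X) → List X`,
left `List (List f)`, right `List f`, bottom `μ_Y`, is a pullback of sets. -/
theorem list_mu_naturality_square_is_pullback {X Y : Type} (f : X → Y) :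
    IsPbSq (List.flatten : List (List X) → List X) (List.map (List.map f))
      (List.map f) (List.flatten : List (List Y) → List Y) :=
  isPbSq_of_existsUnique (fun _ => List.map_flatten ..)
    fun _ _ h => List.existsUnique_flatten_eq_and_map_map_eq h
end

section
/- For a fixed graded set b : B → ℕ, the functor − □ B : GrdSet → GrdSet has a right adjoint [B, −], i.e., there is a natural bijection Hom_GrdSet(A □ B, C) ≅ Hom_GrdSet(A, [B, C]); hence the composition tensor product on graded sets is right closed. -/
/-- The underlying set of the composition tensor product `X □ Y` of graded sets
`x : X → ℕ`, `y : Y → ℕ`: pairs `(a, ψ)` with `ψ` a list over `Y` of length `x a`. -/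
def Sq {X Y : Type} (x : X → ℕ) (y : Y → ℕ) : Type :=
  {p : X × List Y // x p.1 = p.2.length}

/-- The arity map of `X □ Y`: the sum of the arities of the entries of the list. -/
def SqAr {X Y : Type} (x : X → ℕ) (y : Y → ℕ) : Sq x y → ℕ :=
  fun p => (p.val.2.map y).sum

/-- The internal hom `[B, C]` of graded sets with respect to the composition
tensor product: its fiber over `n` consists of functions assigning to each
length-`n` list `ψ` over `B` an element of `C` whose arity is the sum of the
arities of the entries of `ψ`. -/
def HomGrd {B C : Type} (b : B → ℕ) (c : C → ℕ) : Type :=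
  Σ n : ℕ, ∀ ψ : {l : List B // l.length = n}, {e : C // c e = (ψ.val.map b).sum}

/-- Morphisms of graded sets: functions commuting with the arity maps. -/
def GrdHom {A B : Type} (a : A → ℕ) (b : B → ℕ) : Type :=
  {f : A → B // ∀ u, b (f u) = a u}

/-- The map `g □ id_B : A' □ B → A □ B` induced by a graded set morphism `g : A' → A`. -/
def sqMapL {A A' B : Type} {a : A → ℕ} {a' : A' → ℕ} {b : B → ℕ}
    (g : GrdHom a' a) : Sq a' b → Sq a b :=
  fun p => ⟨(g.val p.val.1, p.val.2), by rw [g.property]; exact p.property⟩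

/-- Postcomposition `[B, k] : [B, C] → [B, C']` with a graded set morphism `k : C → C'`. -/
def homGrdPost {B C C' : Type} {b : B → ℕ} {c : C → ℕ} {c' : C' → ℕ}
    (k : GrdHom c c') : HomGrd b c → HomGrd b c' :=
  fun h => ⟨h.1, fun ψ => ⟨k.val (h.2 ψ).val, by rw [k.property]; exact (h.2 ψ).property⟩⟩

/-!
A point of `A □ B` over `u : A` is a list over `B` of length `a u`, so a morphism `A □ B → C`
amounts to assigning to each `u` a function on length-`a u` lists with values in `C` of the right
arities, i.e. an element of the fiber of `[B, C]` over `a u`. Currying and uncurrying are inverse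
up to transport along the arity equation `(G u).1 = a u` in the first component of `[B, C]`.
-/

theorem HomGrd.ext {B C : Type} {b : B → ℕ} {c : C → ℕ} {g g' : HomGrd b c} (h : g.1 = g'.1)
    (hv : ∀ ψ : {l : List B // l.length = g.1},
      (g.2 ψ).val = (g'.2 ⟨ψ.val, ψ.property.trans h⟩).val) :
    g = g' := by
  obtain ⟨n, f⟩ := g
  obtain ⟨m, f'⟩ := g'
  dsimp only at h
  subst h
  exact Sigma.ext rfl (heq_of_eq (funext fun ψ => Subtype.ext (hv ψ)))

namespace GrdHom

variable {A A' B C C' : Type} {a : A → ℕ} {a' : A' → ℕ} {b : B → ℕ} {c : C → ℕ} {c' : C' → ℕ}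

def comp (k : GrdHom b c) (f : GrdHom a b) : GrdHom a c :=
  ⟨k.val ∘ f.val, fun u => (k.property (f.val u)).trans (f.property u)⟩

def sqMapLHom (g : GrdHom a' a) : GrdHom (SqAr a' b) (SqAr a b) :=
  ⟨sqMapL g, fun _ => rfl⟩

def homGrdPostHom (k : GrdHom c c') :
    GrdHom (fun h : HomGrd b c => h.1) (fun h : HomGrd b c' => h.1) :=
  ⟨homGrdPost k, fun _ => rfl⟩

def curry (F : GrdHom (SqAr a b) c) : GrdHom a (fun h : HomGrd b c => h.1) :=
  ⟨fun u => ⟨a u, fun ψ => ⟨F.val ⟨(u, ψ.val), ψ.property.symm⟩, F.property _⟩⟩, fun _ => rfl⟩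

def uncurry (G : GrdHom a (fun h : HomGrd b c => h.1)) : GrdHom (SqAr a b) c :=
  ⟨fun p => ((G.val p.val.1).2 ⟨p.val.2, p.property.symm.trans (G.property p.val.1).symm⟩).val,
    fun p => ((G.val p.val.1).2 ⟨p.val.2, p.property.symm.trans (G.property p.val.1).symm⟩).property⟩

theorem curry_uncurry (G : GrdHom a (fun h : HomGrd b c => h.1)) : curry (uncurry G) = G :=
  Subtype.ext <| funext fun u => HomGrd.ext (G.property u).symm fun _ => rfl

def curryEquiv : GrdHom (SqAr a b) c ≃ GrdHom a (fun h : HomGrd b c => h.1) where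
  toFun := curry
  invFun := uncurry
  left_inv _ := rfl
  right_inv := curry_uncurry

theorem curry_comp_sqMapL (g : GrdHom a' a) (F : GrdHom (SqAr a b) c) :
    curry (F.comp (sqMapLHom g)) = (curry F).comp g :=
  Subtype.ext <| funext fun u => HomGrd.ext (g.property u).symm fun _ => rfl

theorem curry_comp (k : GrdHom c c') (F : GrdHom (SqAr a b) c) :
    curry (k.comp F) = (homGrdPostHom k).comp (curry F) :=
  rfl

end GrdHom

/-- For a fixed graded set `b : B → ℕ`, the functor `− □ B` has a right adjoint
`[B, −]`: there is a bijection `Hom(A □ B, C) ≃ Hom(A, [B, C])`, natural in `A`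
and in `C`; hence the composition tensor product on graded sets is right closed. -/
theorem comp_tensor_right_closed {B : Type} (b : B → ℕ) :
    ∃ E : ∀ (A : Type) (a : A → ℕ) (C : Type) (c : C → ℕ),
        GrdHom (SqAr a b) c ≃ GrdHom a (fun h : HomGrd b c => h.1),
      (∀ (A : Type) (a : A → ℕ) (A' : Type) (a' : A' → ℕ) (C : Type) (c : C → ℕ)
          (g : GrdHom a' a) (F : GrdHom (SqAr a b) c),
        E A' a' C c ⟨F.val ∘ sqMapL g, fun p => F.property (sqMapL g p)⟩
          = ⟨(E A a C c F).val ∘ g.val,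
              fun u => ((E A a C c F).property (g.val u)).trans (g.property u)⟩) ∧
      (∀ (A : Type) (a : A → ℕ) (C : Type) (c : C → ℕ) (C' : Type) (c' : C' → ℕ)
          (k : GrdHom c c') (F : GrdHom (SqAr a b) c),
        E A a C' c' ⟨k.val ∘ F.val, fun p => (k.property (F.val p)).trans (F.property p)⟩
          = ⟨homGrdPost k ∘ (E A a C c F).val,
              fun u => (E A a C c F).property u⟩) := by
  exact ⟨fun _ _ _ _ => GrdHom.curryEquiv, fun _ _ _ _ _ _ => GrdHom.curry_comp_sqMapL,
    fun _ _ _ _ _ _ => GrdHom.curry_comp⟩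
end
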